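/- Let A be a nonempty set, f : A → ℝ, and a⁻ ∈ A with f(a⁻) ≤ f(a) for all a ∈ A, and let ε ≥ 0 be a real number. Let T be a finite binary tree in which each node v carries: a subset P_v ⊆ A with P_root = A and P_v = P_{v₁} ∪ P_{v₂} for every internal node v with children v₁ and v₂; a representative a_v ∈ P_v; and real numbers q(v), m(v), β(v) ≥ 0, r(v) ≥ 0 such that |q(v) − m(v)| ≤ β(v), |m(v) − f(a_v)| ≤ ε, and |f(a) − f(a')| ≤ r(v) for all a, a' ∈ P_v. Define the labeling L(v) = q(v) − β(v) − ε − r(v) and the B-values by the recursion, and let w be the leaf reached by a min-B traverse path. If β(w) ≥ r(w), then m(w) − f(a⁻) ≤ 3·β(w) + ε. -/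

import Mathlib

/-- A finite binary tree: every internal node has exactly two children, and
every node carries a label of type `α`. -/
inductive BTree (α : Type) : Type
  | leaf (a : α) : BTree α
  | node (a : α) (l r : BTree α) : BTree α

namespace BTree

variable {α : Type}

/-- The label of the root of a tree. -/
def label : BTree α → α
  | leaf a => a
  | node a _ _ => a

/-- The list of (the labels of) all nodes of a tree. -/
def nodes : BTree α → List α
  | leaf a => [a]
  | node a l r => a :: (nodes l ++ nodes r)

/-- The `B`-values defined by the recursion `B(v) = L(v)` at a leaf and
`B(v) = max(L(v), min(B(left child), B(right child)))` at an internal node. -/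
noncomputable def Bval (L : α → ℝ) : BTree α → ℝ
  | leaf a => L a
  | node a l r => max (L a) (min (Bval L l) (Bval L r))

/-- `MinBLeaf L t w` : `w` is (the label of) a leaf reached by a min-`B`
traverse path, i.e. a root-to-leaf path which, at every internal node,
continues to a child whose `B`-value is at most that of the other child. -/
def MinBLeaf (L : α → ℝ) : BTree α → α → Prop
  | leaf a, w => w = a
  | node _ l r, w =>
      (Bval L l ≤ Bval L r ∧ MinBLeaf L l w) ∨ (Bval L r ≤ Bval L l ∧ MinBLeaf L r w)

end BTree

/-- The data carried by a node of the action cover tree: a cell `P ⊆ A`, a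
representative `rep ∈ P`, an empirical estimate `q`, its expectation `m`, a
confidence radius `β` and a cell-variation bound `r`. -/
structure NodeData (A : Type) where
  P : Set A
  rep : A
  q : ℝ
  m : ℝ
  β : ℝ
  r : ℝ

/-- Every internal node's cell is the union of the cells of its two children. -/
def BTree.CellCover {A : Type} : BTree (NodeData A) → Prop
  | .leaf _ => True
  | .node d l r => d.P = (BTree.label l).P ∪ (BTree.label r).P ∧
      BTree.CellCover l ∧ BTree.CellCover r

/-!
Since `B(v) ≥ min(B(v₁), B(v₂))` and a min-`B` path always moves to the child attaining this
minimum, `B` does not increase along the path, so its leaf satisfies `L(w) = B(w) ≤ B(root)`.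
Conversely, `L(v) = q(v) − β(v) − ε − r(v)` is a lower bound for `f` on the cell `P_v`, and as the
cells of the children cover the cell of their parent, `B(root)` is a lower bound for `f` on
`P_root = A`; in particular `B(root) ≤ f(a⁻)`. Hence
`m(w) ≤ q(w) + β(w) = L(w) + 2β(w) + ε + r(w) ≤ f(a⁻) + 3β(w) + ε`.
-/

namespace BTree

variable {α : Type}

theorem MinBLeaf.mem_nodes {L : α → ℝ} {t : BTree α} {w : α} (hw : MinBLeaf L t w) :
    w ∈ t.nodes := by
  induction t with
  | leaf a => simp [nodes, show w = a from hw]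
  | node a l r ihl ihr =>
    rcases hw with ⟨-, hw⟩ | ⟨-, hw⟩
    · simp [nodes, ihl hw]
    · simp [nodes, ihr hw]

theorem MinBLeaf.le_Bval {L : α → ℝ} {t : BTree α} {w : α} (hw : MinBLeaf L t w) :
    L w ≤ Bval L t := by
  induction t with
  | leaf a => simp [Bval, show w = a from hw]
  | node a l r ihl ihr =>
    rcases hw with ⟨hle, hw⟩ | ⟨hle, hw⟩
    · exact le_max_of_le_right (le_min (ihl hw) ((ihl hw).trans hle))
    · exact le_max_of_le_right (le_min ((ihr hw).trans hle) (ihr hw))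

theorem Bval_le_of_mem_cell {A : Type} {L : NodeData A → ℝ} {g : A → ℝ}
    {t : BTree (NodeData A)} (hcov : t.CellCover)
    (hL : ∀ d ∈ t.nodes, ∀ a ∈ d.P, L d ≤ g a) {a : A} (ha : a ∈ t.label.P) :
    Bval L t ≤ g a := by
  induction t with
  | leaf d => exact hL d (by simp [nodes]) a ha
  | node d l r ihl ihr =>
    obtain ⟨hunion, hcovl, hcovr⟩ := hcov
    have hLl : ∀ e ∈ l.nodes, ∀ b ∈ e.P, L e ≤ g b :=
      fun e he => hL e (by simp [nodes, he])
    have hLr : ∀ e ∈ r.nodes, ∀ b ∈ e.P, L e ≤ g b :=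
      fun e he => hL e (by simp [nodes, he])
    refine max_le (hL d (by simp [nodes]) a ha) ?_
    rcases (hunion ▸ ha : a ∈ l.label.P ∪ r.label.P) with hal | har
    · exact (min_le_left _ _).trans (ihl hcovl hLl hal)
    · exact (min_le_right _ _).trans (ihr hcovr hLr har)

end BTree

theorem NodeData.lowerBound_le {A : Type} {f : A → ℝ} {ε : ℝ} {d : NodeData A} {a : A}
    (hqm : |d.q - d.m| ≤ d.β) (hmf : |d.m - f d.rep| ≤ ε) (hvar : |f d.rep - f a| ≤ d.r) :
    d.q - d.β - ε - d.r ≤ f a := by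
  linarith [(abs_le.mp hqm).2, (abs_le.mp hmf).2, (abs_le.mp hvar).2]

theorem stmt_16_general {A : Type} (f : A → ℝ) (aMin : A) (ε : ℝ)
    (t : BTree (NodeData A))
    (hroot : t.label.P = Set.univ)
    (hcov : BTree.CellCover t)
    (hnodes : ∀ d ∈ t.nodes,
      d.rep ∈ d.P ∧ 0 ≤ d.β ∧ 0 ≤ d.r ∧
      |d.q - d.m| ≤ d.β ∧ |d.m - f d.rep| ≤ ε ∧
      ∀ a ∈ d.P, ∀ a' ∈ d.P, |f a - f a'| ≤ d.r)
    (w : NodeData A)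
    (hw : BTree.MinBLeaf (fun d => d.q - d.β - ε - d.r) t w)
    (hβr : w.r ≤ w.β) :
    w.m - f aMin ≤ 3 * w.β + ε := by
  have hB : BTree.Bval (fun d => d.q - d.β - ε - d.r) t ≤ f aMin := by
    refine BTree.Bval_le_of_mem_cell hcov (fun d hd a ha => ?_) (hroot ▸ Set.mem_univ aMin)
    obtain ⟨hrep, -, -, hqm, hmf, hvar⟩ := hnodes d hd
    exact NodeData.lowerBound_le hqm hmf (hvar _ hrep a ha)
  obtain ⟨-, -, -, hqm, -, -⟩ := hnodes w hw.mem_nodes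
  linarith [hw.le_Bval, (abs_le.mp hqm).1]

/-- Let `A` be a nonempty set, `f : A → ℝ`, and `a⁻ ∈ A` with `f(a⁻) ≤ f(a)`
for all `a ∈ A`, and let `ε ≥ 0` be a real number.  Let `T` be a finite binary
tree in which each node `v` carries: a subset `P_v ⊆ A` with `P_root = A` and
`P_v = P_{v₁} ∪ P_{v₂}` for every internal node `v` with children `v₁, v₂`; a
representative `a_v ∈ P_v`; and real numbers `q(v), m(v), β(v) ≥ 0, r(v) ≥ 0`
such that `|q(v) − m(v)| ≤ β(v)`, `|m(v) − f(a_v)| ≤ ε`, and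
`|f(a) − f(a')| ≤ r(v)` for all `a, a' ∈ P_v`.  Define the labeling
`L(v) = q(v) − β(v) − ε − r(v)` and the `B`-values by the recursion, and let
`w` be the leaf reached by a min-`B` traverse path.  If `β(w) ≥ r(w)`, then
`m(w) − f(a⁻) ≤ 3·β(w) + ε`. -/
theorem stmt_16 {A : Type} (f : A → ℝ) (aMin : A) (hmin : ∀ a, f aMin ≤ f a)
    (ε : ℝ) (hε : 0 ≤ ε)
    (t : BTree (NodeData A))
    (hroot : t.label.P = Set.univ)
    (hcov : BTree.CellCover t)
    (hnodes : ∀ d ∈ t.nodes,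
      d.rep ∈ d.P ∧ 0 ≤ d.β ∧ 0 ≤ d.r ∧
      |d.q - d.m| ≤ d.β ∧ |d.m - f d.rep| ≤ ε ∧
      ∀ a ∈ d.P, ∀ a' ∈ d.P, |f a - f a'| ≤ d.r)
    (w : NodeData A)
    (hw : BTree.MinBLeaf (fun d => d.q - d.β - ε - d.r) t w)
    (hβr : w.r ≤ w.β) :
    w.m - f aMin ≤ 3 * w.β + ε :=
  stmt_16_general f aMin ε t hroot hcov hnodes w hw hβr
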